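/- Let X and Y be complex Banach spaces, A ∈ B(X), B ∈ B(Y), C ∈ B(Y, X), and let M_C ∈ B(X ⊕ Y) be the upper-triangular operator matrix M_C(x, y) = (Ax + Cy, By). If A is Drazin invertible, then M_C has finite ascent if and only if B has finite ascent, and M_C has finite descent if and only if B has finite descent. -/

import Mathlib

/-! Drazin invertibility of `A` gives an index `k` with `ker A^k = ker A^(k+1)` and
`ran A^k = ran A^(k+1)`, so both chains are constant from `k` on. Of `M = M_C` only two features
matter: `M (x, 0) = (A x, 0)` and `(M z).2 = B z.2`; hence `ran B^n` is the projection of `ran M^n`,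
and `M^m z = (A^m z.1, 0)` whenever `z.2 = 0`. A kernel or range relation for `B^n` therefore
holds for `M^n` up to an error in `X × 0`, which the stable kernel or range of `A` absorbs once the
index is raised by `k`. Conversely, `y ∈ ker B^(n+1)` lifts to `(-v, y) ∈ ker M^(n+1+k)`, where the
descent of `A` supplies `v` with `A^(n+1+k) v = A^k (M^(n+1) (0, y)).1`.
-/

noncomputable section

open ContinuousLinearMap Metric Set

variable {E : Type*} [NormedAddCommGroup E] [NormedSpace ℂ E]
variable {X Y : Type*} [NormedAddCommGroup X] [NormedSpace ℂ X] [CompleteSpace X]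
  [NormedAddCommGroup Y] [NormedSpace ℂ Y] [CompleteSpace Y]

/-- `T` has finite ascent: some power has the same kernel as the next one. -/
def HasFiniteAscent (T : E →L[ℂ] E) : Prop :=
  ∃ k : ℕ, LinearMap.ker ((T ^ k : E →L[ℂ] E) : E →ₗ[ℂ] E) = LinearMap.ker ((T ^ (k + 1) : E →L[ℂ] E) : E →ₗ[ℂ] E)

/-- `T` has finite descent: some power has the same range as the next one. -/
def HasFiniteDescent (T : E →L[ℂ] E) : Prop :=
  ∃ k : ℕ, LinearMap.range ((T ^ k : E →L[ℂ] E) : E →ₗ[ℂ] E) = LinearMap.range ((T ^ (k + 1) : E →L[ℂ] E) : E →ₗ[ℂ] E)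

/-- `T` is Drazin invertible. -/
def IsDrazinInvertible (T : E →L[ℂ] E) : Prop :=
  ∃ S : E →L[ℂ] E, ∃ k : ℕ, T * S = S * T ∧ S * T * S = S ∧ T ^ (k + 1) * S = T ^ k

/-- The upper-triangular operator matrix `M_C (x, y) = (A x + C y, B y)` on `X ⊕ Y`. -/
def ucMat (A : X →L[ℂ] X) (B : Y →L[ℂ] Y) (C : Y →L[ℂ] X) :
    (X × Y) →L[ℂ] (X × Y) :=
  (A.comp (ContinuousLinearMap.fst ℂ X Y) + C.comp (ContinuousLinearMap.snd ℂ X Y)).prod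
    (B.comp (ContinuousLinearMap.snd ℂ X Y))

namespace Module.End

variable {R M : Type*} [Semiring R] [AddCommMonoid M] [Module R M] {f g : Module.End R M} {k : ℕ}

theorem ker_pow_add_eq_ker_pow (h : LinearMap.ker (f ^ k) = LinearMap.ker (f ^ (k + 1)))
    (m : ℕ) : LinearMap.ker (f ^ (k + m)) = LinearMap.ker (f ^ k) := by
  induction m with
  | zero => rfl
  | succ m ih =>
    rw [← ih, show k + (m + 1) = k + 1 + m by omega, pow_add f (k + 1), pow_add f k m, mul_eq_comp,
      mul_eq_comp, LinearMap.ker_comp, LinearMap.ker_comp, h]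

theorem range_pow_add_eq_range_pow
    (h : LinearMap.range (f ^ k) = LinearMap.range (f ^ (k + 1))) (m : ℕ) :
    LinearMap.range (f ^ (k + m)) = LinearMap.range (f ^ k) := by
  induction m with
  | zero => rfl
  | succ m ih =>
    rw [← ih, show k + (m + 1) = m + (k + 1) by omega, show k + m = m + k by omega, pow_add f m,
      pow_add f m, mul_eq_comp, mul_eq_comp, LinearMap.range_comp, LinearMap.range_comp, h]


theorem ker_pow_eq_ker_pow_succ_of_eq_mul_pow_succ (h : f ^ k = g * f ^ (k + 1)) :
    LinearMap.ker (f ^ k) = LinearMap.ker (f ^ (k + 1)) := by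
  refine le_antisymm ((LinearMap.iterateKer f).monotone k.le_succ) ?_
  conv_rhs => rw [h, mul_eq_comp]
  exact LinearMap.ker_le_ker_comp _ _

theorem range_pow_eq_range_pow_succ_of_eq_pow_succ_mul (h : f ^ k = f ^ (k + 1) * g) :
    LinearMap.range (f ^ k) = LinearMap.range (f ^ (k + 1)) := by
  refine le_antisymm ?_ ((LinearMap.iterateRange f).monotone k.le_succ)
  conv_lhs => rw [h, mul_eq_comp]
  exact LinearMap.range_comp_le_range _ _

end Module.End

namespace IsDrazinInvertible

variable {T : E →L[ℂ] E}

theorem hasFiniteAscent (hT : IsDrazinInvertible T) : HasFiniteAscent T := by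
  obtain ⟨S, k, hcomm, -, hk⟩ := hT
  have hk' : T ^ k = S * T ^ (k + 1) := by
    rw [← (Commute.pow_left hcomm (k + 1)).eq, hk]
  refine ⟨k, ?_⟩
  simp only [toLinearMap_pow]
  apply Module.End.ker_pow_eq_ker_pow_succ_of_eq_mul_pow_succ (g := (S : E →ₗ[ℂ] E))
  rw [← toLinearMap_pow, ← toLinearMap_pow, ← toLinearMap_mul, hk']

theorem hasFiniteDescent (hT : IsDrazinInvertible T) : HasFiniteDescent T := by
  obtain ⟨S, k, -, -, hk⟩ := hT
  refine ⟨k, ?_⟩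
  simp only [toLinearMap_pow]
  apply Module.End.range_pow_eq_range_pow_succ_of_eq_pow_succ_mul (g := (S : E →ₗ[ℂ] E))
  rw [← toLinearMap_pow, ← toLinearMap_pow, ← toLinearMap_mul, hk]

end IsDrazinInvertible

section UpperTriangular

variable {R M₁ M₂ : Type*} [Ring R] [AddCommGroup M₁] [Module R M₁] [AddCommGroup M₂] [Module R M₂]

/-- `T` is the block operator matrix `[[A, *], [0, B]]` on `M₁ × M₂`. -/
structure Module.End.IsUpperTriangular (T : Module.End R (M₁ × M₂)) (A : Module.End R M₁)
    (B : Module.End R M₂) : Prop where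
  comp_inl : T ∘ₗ LinearMap.inl R M₁ M₂ = LinearMap.inl R M₁ M₂ ∘ₗ A
  snd_comp : LinearMap.snd R M₁ M₂ ∘ₗ T = B ∘ₗ LinearMap.snd R M₁ M₂

namespace Module.End.IsUpperTriangular

variable {T : Module.End R (M₁ × M₂)} {A : Module.End R M₁} {B : Module.End R M₂}

theorem pow (h : IsUpperTriangular T A B) (n : ℕ) : IsUpperTriangular (T ^ n) (A ^ n) (B ^ n) :=
  ⟨commute_pow_left_of_commute h.comp_inl n,
    (commute_pow_left_of_commute h.snd_comp.symm n).symm⟩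

theorem apply_inl (h : IsUpperTriangular T A B) (x : M₁) : T (x, 0) = (A x, 0) :=
  LinearMap.congr_fun h.comp_inl x

theorem snd_apply (h : IsUpperTriangular T A B) (z : M₁ × M₂) : (T z).2 = B z.2 :=
  LinearMap.congr_fun h.snd_comp z

theorem apply_of_snd_eq_zero (h : IsUpperTriangular T A B) {z : M₁ × M₂} (hz : z.2 = 0) :
    T z = (A z.1, 0) := by
  rw [← h.apply_inl, ← hz]

theorem range_right_eq_map_snd (h : IsUpperTriangular T A B) :
    LinearMap.range B = (LinearMap.range T).map (LinearMap.snd R M₁ M₂) := by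
  rw [← LinearMap.range_comp, h.snd_comp, LinearMap.range_comp_of_range_eq_top _ Submodule.range_snd]

theorem range_right_pow_eq_range_pow_succ (h : IsUpperTriangular T A B) {n : ℕ}
    (hT : LinearMap.range (T ^ n) = LinearMap.range (T ^ (n + 1))) :
    LinearMap.range (B ^ n) = LinearMap.range (B ^ (n + 1)) := by
  rw [(h.pow n).range_right_eq_map_snd, (h.pow (n + 1)).range_right_eq_map_snd, hT]

theorem ker_right_pow_eq_ker_pow_succ (h : IsUpperTriangular T A B) {k n : ℕ}
    (hA : LinearMap.range (A ^ k) = LinearMap.range (A ^ (k + 1)))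
    (hT : LinearMap.ker (T ^ n) = LinearMap.ker (T ^ (n + 1))) :
    LinearMap.ker (B ^ n) = LinearMap.ker (B ^ (n + 1)) := by
  refine le_antisymm ((LinearMap.iterateKer B).monotone n.le_succ) fun y hy ↦ ?_
  set w := (T ^ (n + 1)) (0, y)
  have hw : w.2 = 0 := by rw [(h.pow _).snd_apply]; exact hy
  obtain ⟨v, hv⟩ : (A ^ k) w.1 ∈ LinearMap.range (A ^ (k + (n + 1))) := by
    rw [Module.End.range_pow_add_eq_range_pow hA]; exact ⟨_, rfl⟩
  have hvy : (-v, y) ∈ LinearMap.ker (T ^ (k + (n + 1))) := by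
    rw [LinearMap.mem_ker, show (-v, y) = (-v, 0) + (0, y) by simp, map_add, (h.pow _).apply_inl,
      map_neg, hv, pow_add, Module.End.mul_apply, (h.pow k).apply_of_snd_eq_zero hw]
    simp
  rw [show k + (n + 1) = n + (k + 1) by omega, Module.End.ker_pow_add_eq_ker_pow hT] at hvy
  simpa [(h.pow n).snd_apply] using congrArg Prod.snd (LinearMap.mem_ker.mp hvy)

theorem ker_pow_add_eq_ker_pow_add_succ (h : IsUpperTriangular T A B) {k n : ℕ}
    (hA : LinearMap.ker (A ^ k) = LinearMap.ker (A ^ (k + 1)))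
    (hB : LinearMap.ker (B ^ n) = LinearMap.ker (B ^ (n + 1))) :
    LinearMap.ker (T ^ (k + n)) = LinearMap.ker (T ^ (k + n + 1)) := by
  refine le_antisymm ((LinearMap.iterateKer T).monotone (k + n).le_succ) fun z hz ↦ ?_
  rw [LinearMap.mem_ker] at hz
  have hzB : z.2 ∈ LinearMap.ker (B ^ n) := by
    rw [← Module.End.ker_pow_add_eq_ker_pow hB (k + 1), LinearMap.mem_ker,
      ← (h.pow _).snd_apply, show n + (k + 1) = k + n + 1 by omega, hz]
    rfl
  set w := (T ^ n) z
  have hw : w.2 = 0 := by rw [(h.pow n).snd_apply]; exact hzB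
  have hAw : w.1 ∈ LinearMap.ker (A ^ (k + 1)) := by
    have hTw : (T ^ (k + 1)) w = 0 := by
      rw [← Module.End.mul_apply, ← pow_add, show k + 1 + n = k + n + 1 by omega, hz]
    rw [(h.pow _).apply_of_snd_eq_zero hw] at hTw
    exact congrArg Prod.fst hTw
  rw [← hA, LinearMap.mem_ker] at hAw
  rw [LinearMap.mem_ker, pow_add, Module.End.mul_apply, (h.pow k).apply_of_snd_eq_zero hw, hAw]
  rfl

theorem range_pow_add_eq_range_pow_add_succ (h : IsUpperTriangular T A B) {k n : ℕ}
    (hA : LinearMap.range (A ^ k) = LinearMap.range (A ^ (k + 1)))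
    (hB : LinearMap.range (B ^ n) = LinearMap.range (B ^ (n + 1))) :
    LinearMap.range (T ^ (k + n)) = LinearMap.range (T ^ (k + n + 1)) := by
  refine le_antisymm ?_ ((LinearMap.iterateRange T).monotone (k + n).le_succ)
  rintro _ ⟨z, rfl⟩
  obtain ⟨y, hy⟩ : (B ^ n) z.2 ∈ LinearMap.range (B ^ (n + 1)) := hB ▸ ⟨z.2, rfl⟩
  set u := (T ^ n) z - (T ^ (n + 1)) (0, y) with hu_def
  have hu : u.2 = 0 := by
    simp only [u, Prod.snd_sub, (h.pow n).snd_apply, (h.pow (n + 1)).snd_apply, hy, sub_self]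
  obtain ⟨v, hv⟩ : (A ^ k) u.1 ∈ LinearMap.range (A ^ (k + (n + 1))) := by
    rw [Module.End.range_pow_add_eq_range_pow hA]; exact ⟨_, rfl⟩
  refine ⟨(v, y), ?_⟩
  change (T ^ (k + (n + 1))) (v, y) = _
  rw [show (v, y) = (v, 0) + (0, y) by simp, map_add, (h.pow _).apply_inl, hv, pow_add T k (n + 1),
    Module.End.mul_apply, ← (h.pow k).apply_of_snd_eq_zero hu, ← map_add, hu_def, sub_add_cancel,
    ← Module.End.mul_apply, ← pow_add]

end Module.End.IsUpperTriangular

end UpperTriangular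

section

variable {V W : Type*} [NormedAddCommGroup V] [NormedSpace ℂ V] [NormedAddCommGroup W]
  [NormedSpace ℂ W]

theorem isUpperTriangular_ucMat (A : V →L[ℂ] V) (B : W →L[ℂ] W) (C : W →L[ℂ] V) :
    Module.End.IsUpperTriangular (ucMat A B C : V × W →ₗ[ℂ] V × W) A B :=
  ⟨by ext <;> simp [ucMat], by ext <;> simp [ucMat]⟩

end

theorem stmt4 (A : X →L[ℂ] X) (B : Y →L[ℂ] Y) (C : Y →L[ℂ] X) (hA : IsDrazinInvertible A) :
    (HasFiniteAscent (ucMat A B C) ↔ HasFiniteAscent B) ∧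
      (HasFiniteDescent (ucMat A B C) ↔ HasFiniteDescent B) := by
  have h := isUpperTriangular_ucMat A B C
  obtain ⟨k, hkerA⟩ := hA.hasFiniteAscent
  obtain ⟨l, hrangeA⟩ := hA.hasFiniteDescent
  simp only [HasFiniteAscent, HasFiniteDescent, toLinearMap_pow] at hkerA hrangeA ⊢
  exact ⟨⟨fun ⟨n, hn⟩ ↦ ⟨n, h.ker_right_pow_eq_ker_pow_succ hrangeA hn⟩,
      fun ⟨n, hn⟩ ↦ ⟨k + n, h.ker_pow_add_eq_ker_pow_add_succ hkerA hn⟩⟩,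
    ⟨fun ⟨n, hn⟩ ↦ ⟨n, h.range_right_pow_eq_range_pow_succ hn⟩,
      fun ⟨n, hn⟩ ↦ ⟨l + n, h.range_pow_add_eq_range_pow_add_succ hrangeA hn⟩⟩⟩
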